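/- arXiv:2208.14422 — 4 statements merged into one kernel-verified Lean document; each statement's English description precedes it below -/
import Mathlib

section
/- Fix an integer d ≥ 2 and an integer k with 1 ≤ k ≤ d². Consider four systems C, D, A, B, each with Hilbert space ℂ^d, the initial state ψ⁺_{CD} ⊗ ψ⁺_{AB}, a POVM {M_i}_{i=1}^k on the factor D ⊗ A, and unitaries U_i on the factor B. Define the entanglement fidelity of the constrained teleportation protocol as F({M_i, U_i}) = Σ_{i=1}^k tr[(ψ⁺_{CB} ⊗ I_{DA}) (I_C ⊗ M_i ⊗ U_i)(ψ⁺_{CD} ⊗ ψ⁺_{AB})(I_C ⊗ I_{DA} ⊗ U_i†)], where ψ⁺_{CB} is the projector onto the maximally entangled state of the factors C and B. Then the maximum of F({M_i, U_i}) over all k-element POVMs {M_i} on D ⊗ A and all families of unitaries {U_i} on B equals k/d². -/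
/-!
If `vᵢ` is the vectorization of `Uᵢ`, the `i`-th summand of the fidelity is `⟨vᵢ, Mᵢ vᵢ⟩ / d³`,
and `⟨vᵢ, vᵢ⟩ = tr (Uᵢ† Uᵢ) = d`. Since `Mᵢ ≤ Σⱼ Mⱼ = I`, every summand is at most `1/d²`, so
`F ≤ k/d²`. Equality is attained by `k` of the `d²` Weyl unitaries `Z^b X^a`: their
vectorizations are orthogonal, so the rank-one projectors onto them, with the projector onto
the orthogonal complement of their span added to one of them, form a POVM that fixes each `vᵢ`.
-/

open Matrix BigOperators ComplexOrder

noncomputable section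

/-- The maximally entangled state `|ψ⁺⟩ = (1/√n) Σᵢ |i⟩ ⊗ |i⟩` on `ℂ^n ⊗ ℂ^n`. -/
def mes (n : ℕ) : Fin n × Fin n → ℂ :=
  fun p => if p.1 = p.2 then ((1 / Real.sqrt n : ℝ) : ℂ) else 0

/-- The rank-one projector `ψ⁺ = |ψ⁺⟩⟨ψ⁺|` onto the maximally entangled state. -/
def mesProj (n : ℕ) : Matrix (Fin n × Fin n) (Fin n × Fin n) ℂ :=
  Matrix.of fun p q => mes n p * (starRingEnd ℂ) (mes n q)

/-- Index type for the four systems, ordered as (C, D, A, B), each of dimension `n`. -/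
abbrev I4 (n : ℕ) := Fin n × Fin n × Fin n × Fin n

/-- `ψ⁺_{CB} ⊗ I_{DA}` as an operator on C ⊗ D ⊗ A ⊗ B. -/
def psiCB (n : ℕ) : Matrix (I4 n) (I4 n) ℂ :=
  Matrix.of fun p q =>
    mesProj n (p.1, p.2.2.2) (q.1, q.2.2.2) *
      (if p.2.1 = q.2.1 ∧ p.2.2.1 = q.2.2.1 then 1 else 0)

/-- The initial state `ψ⁺_{CD} ⊗ ψ⁺_{AB}` as an operator on C ⊗ D ⊗ A ⊗ B. -/
def psiInit (n : ℕ) : Matrix (I4 n) (I4 n) ℂ :=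
  Matrix.of fun p q =>
    mesProj n (p.1, p.2.1) (q.1, q.2.1) *
      mesProj n (p.2.2.1, p.2.2.2) (q.2.2.1, q.2.2.2)

/-- `I_C ⊗ M_{DA} ⊗ U_B` as an operator on C ⊗ D ⊗ A ⊗ B. -/
def opMid (n : ℕ) (M : Matrix (Fin n × Fin n) (Fin n × Fin n) ℂ)
    (U : Matrix (Fin n) (Fin n) ℂ) : Matrix (I4 n) (I4 n) ℂ :=
  Matrix.of fun p q =>
    (if p.1 = q.1 then 1 else 0) * M (p.2.1, p.2.2.1) (q.2.1, q.2.2.1) *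
      U p.2.2.2 q.2.2.2

/-- `I_C ⊗ I_{DA} ⊗ V_B` as an operator on C ⊗ D ⊗ A ⊗ B. -/
def opB (n : ℕ) (V : Matrix (Fin n) (Fin n) ℂ) : Matrix (I4 n) (I4 n) ℂ :=
  Matrix.of fun p q =>
    (if p.1 = q.1 ∧ p.2.1 = q.2.1 ∧ p.2.2.1 = q.2.2.1 then 1 else 0) *
      V p.2.2.2 q.2.2.2

/-- The entanglement fidelity
`F({Mᵢ, Uᵢ}) = Σᵢ tr[(ψ⁺_{CB} ⊗ I_{DA})(I_C ⊗ Mᵢ ⊗ Uᵢ)(ψ⁺_{CD} ⊗ ψ⁺_{AB})(I_C ⊗ I_{DA} ⊗ Uᵢ†)]`. -/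
def telFid (n k : ℕ) (M : Fin k → Matrix (Fin n × Fin n) (Fin n × Fin n) ℂ)
    (U : Fin k → Matrix (Fin n) (Fin n) ℂ) : ℝ :=
  (∑ i, Matrix.trace (psiCB n * opMid n (M i) (U i) * psiInit n * opB n (U i)ᴴ)).re

namespace ConstrainedTeleportation

section POVM

variable {ι n R : Type*} [Fintype n] [CommRing R] [StarRing R]

section Orthonormal

variable [DecidableEq ι] {v : ι → n → R}
  (hv : ∀ i j, star (v i) ⬝ᵥ v j = if i = j then 1 else 0)
include hv

theorem vecMulVec_star_mulVec (i j : ι) :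
    vecMulVec (v i) (star (v i)) *ᵥ v j = if i = j then v i else 0 := by
  rw [vecMulVec_mulVec, op_smul_eq_smul, hv]
  split_ifs <;> simp

theorem vecMulVec_star_mul_vecMulVec_star (i j : ι) :
    vecMulVec (v i) (star (v i)) * vecMulVec (v j) (star (v j)) =
      if i = j then vecMulVec (v i) (star (v i)) else 0 := by
  rw [vecMulVec_mul_vecMulVec, hv]
  split_ifs with h <;> simp [h]

end Orthonormal

variable [PartialOrder R] [StarOrderedRing R]

theorem posSemidef_of_isHermitian_of_mul_self_eq {A : Matrix n n R} (hA : A.IsHermitian)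
    (hAA : A * A = A) : A.PosSemidef := by
  simpa only [hA.eq, hAA] using posSemidef_conjTranspose_mul_self A

variable [Fintype ι]

theorem star_dotProduct_mulVec_le_of_sum_eq_one [DecidableEq n] {M : ι → Matrix n n R}
    (hM : ∀ i, (M i).PosSemidef) (hsum : ∑ i, M i = 1) (v : n → R) (i : ι) :
    star v ⬝ᵥ (M i *ᵥ v) ≤ star v ⬝ᵥ v :=
  calc star v ⬝ᵥ (M i *ᵥ v) ≤ ∑ j, star v ⬝ᵥ (M j *ᵥ v) :=
        Finset.single_le_sum (fun j _ ↦ (hM j).dotProduct_mulVec_nonneg v) (Finset.mem_univ i)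
    _ = star v ⬝ᵥ v := by rw [← dotProduct_sum, ← sum_mulVec, hsum, one_mulVec]

theorem exists_povm_mulVec_eq_self [DecidableEq ι] [DecidableEq n] [Nonempty ι] {v : ι → n → R}
    (hv : ∀ i j, star (v i) ⬝ᵥ v j = if i = j then 1 else 0) :
    ∃ M : ι → Matrix n n R, (∀ i, (M i).PosSemidef) ∧ ∑ i, M i = 1 ∧ ∀ i, M i *ᵥ v i = v i := by
  let i₀ := Classical.arbitrary ι
  let Q := ∑ j ∈ Finset.univ.erase i₀, vecMulVec (v j) (star (v j))
  have hQv : Q *ᵥ v i₀ = 0 := by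
    rw [sum_mulVec]
    exact Finset.sum_eq_zero fun j hj ↦ by
      rw [vecMulVec_star_mulVec hv, if_neg (Finset.ne_of_mem_erase hj)]
  have hQ : Q.IsHermitian := by
    simp only [Q, IsHermitian, conjTranspose_sum]
    exact Finset.sum_congr rfl fun j _ ↦ (posSemidef_vecMulVec_self_star (v j)).isHermitian
  have hQQ : Q * Q = Q := by
    simp only [Q, Finset.sum_mul_sum, vecMulVec_star_mul_vecMulVec_star hv]
    exact Finset.sum_congr rfl fun j hj ↦ by rw [Finset.sum_ite_eq, if_pos hj]
  refine ⟨fun i ↦ if i = i₀ then 1 - Q else vecMulVec (v i) (star (v i)), fun i ↦ ?_, ?_,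
    fun i ↦ ?_⟩
  · dsimp only
    split_ifs
    · refine posSemidef_of_isHermitian_of_mul_self_eq (isHermitian_one.sub hQ) ?_
      rw [sub_mul, one_mul, mul_sub, mul_one, hQQ, sub_self, sub_zero]
    · exact posSemidef_vecMulVec_self_star (v i)
  · rw [← Finset.add_sum_erase _ _ (Finset.mem_univ i₀), if_pos rfl,
      Finset.sum_congr rfl fun i hi ↦ if_neg (Finset.ne_of_mem_erase hi), sub_add_cancel]
  · dsimp only
    split_ifs with h
    · rw [h, sub_mulVec, hQv, one_mulVec, sub_zero]
    · rw [vecMulVec_star_mulVec hv, if_pos rfl]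

end POVM

section Weyl

variable {n : ℕ} {ζ : ℂ}

theorem conj_pow_eq_inv_pow (hζ : IsPrimitiveRoot ζ n) (hn : n ≠ 0) (m : ℕ) :
    (starRingEnd ℂ) (ζ ^ m) = (ζ ^ m)⁻¹ :=
  (Complex.inv_eq_conj (by rw [norm_pow, hζ.norm'_eq_one hn, one_pow])).symm

theorem sum_conj_pow_mul_pow (hζ : IsPrimitiveRoot ζ n) (b c : Fin n) :
    ∑ i : Fin n, (starRingEnd ℂ) (ζ ^ ((b : ℕ) * i)) * ζ ^ ((c : ℕ) * i) =
      if b = c then (n : ℂ) else 0 := by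
  have hn : n ≠ 0 := b.pos.ne'
  have hζ0 : ζ ≠ 0 := hζ.ne_zero hn
  let r := ζ ^ (c : ℕ) / ζ ^ (b : ℕ)
  have hterm (i : ℕ) : (starRingEnd ℂ) (ζ ^ ((b : ℕ) * i)) * ζ ^ ((c : ℕ) * i) = r ^ i := by
    rw [conj_pow_eq_inv_pow hζ hn, div_pow, ← pow_mul, ← pow_mul, inv_mul_eq_div]
  simp only [hterm, Fin.sum_univ_eq_sum_range (r ^ ·)]
  split_ifs with hbc
  · simp [r, hbc, hζ0]
  · have hr : r ≠ 1 := by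
      rw [Ne, div_eq_one_iff_eq (pow_ne_zero _ hζ0)]
      exact fun h ↦ hbc (Fin.ext (hζ.pow_inj c.isLt b.isLt h).symm)
    have hrn : r ^ n = 1 := by
      rw [div_pow, ← pow_mul, ← pow_mul, mul_comm, pow_mul, hζ.pow_eq_one, one_pow, mul_comm,
        pow_mul, hζ.pow_eq_one, one_pow, div_one]
    rw [geom_sum_eq hr, hrn, sub_self, zero_div]

variable (ζ) in
/-- `weyl ζ (a, b) = Z ^ b * X ^ a` for the shift `X eⱼ = e_{j+1}` and the clock
`Z = diagonal (ζ ^ ·)`. -/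
def weyl (p : Fin n × Fin n) : Matrix (Fin n) (Fin n) ℂ :=
  of fun i j ↦ if i = j + p.1 then ζ ^ ((p.2 : ℕ) * i) else 0

theorem weyl_mem_unitaryGroup [NeZero n] (hζ : IsPrimitiveRoot ζ n) (p : Fin n × Fin n) :
    weyl ζ p ∈ unitaryGroup (Fin n) ℂ := by
  rw [mem_unitaryGroup_iff']
  ext j j'
  have hunit (m : ℕ) : (starRingEnd ℂ) (ζ ^ m) * ζ ^ m = 1 := by
    rw [conj_pow_eq_inv_pow hζ (NeZero.ne n),
      inv_mul_cancel₀ (pow_ne_zero _ (hζ.ne_zero (NeZero.ne n)))]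
  simp only [mul_apply, star_apply, weyl, of_apply, apply_ite (star : ℂ → ℂ), star_zero,
    ite_mul, mul_ite, zero_mul, mul_zero, Complex.star_def, hunit, Finset.sum_ite_eq',
    Finset.mem_univ, if_true, add_left_inj, one_apply]
  exact if_congr eq_comm rfl rfl

theorem star_vec_transpose_weyl_dotProduct [NeZero n] (hζ : IsPrimitiveRoot ζ n)
    (p q : Fin n × Fin n) :
    star (vec (weyl ζ p)ᵀ) ⬝ᵥ vec (weyl ζ q)ᵀ = if p = q then (n : ℂ) else 0 := by
  simp only [dotProduct, Fintype.sum_prod_type, vec, transpose_apply, Pi.star_apply, weyl,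
    of_apply]
  rw [Finset.sum_comm]
  simp only [apply_ite (star : ℂ → ℂ), star_zero, ite_mul, mul_ite, zero_mul, mul_zero,
    Complex.star_def, Finset.sum_ite_eq', Finset.mem_univ, if_true, add_right_inj,
    Finset.sum_ite_irrel, Finset.sum_const_zero]
  have hshift : ∑ x : Fin n, (starRingEnd ℂ) (ζ ^ ((p.2 : ℕ) * ↑(x + q.1))) *
      ζ ^ ((q.2 : ℕ) * ↑(x + q.1)) =
      ∑ i : Fin n, (starRingEnd ℂ) (ζ ^ ((p.2 : ℕ) * i)) * ζ ^ ((q.2 : ℕ) * i) :=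
    Fintype.sum_equiv (Equiv.addRight q.1) _ _ fun _ ↦ rfl
  rw [hshift, sum_conj_pow_mul_pow hζ, ← ite_and]
  exact if_congr (by rw [Prod.ext_iff, eq_comm (a := q.1)]) rfl rfl

end Weyl

section Fidelity

theorem mesProj_apply (n : ℕ) (p q : Fin n × Fin n) :
    mesProj n p q = if p.1 = p.2 ∧ q.1 = q.2 then (n : ℂ)⁻¹ else 0 := by
  have hsq : ((√n : ℝ) : ℂ)⁻¹ * ((√n : ℝ) : ℂ)⁻¹ = (n : ℂ)⁻¹ := by
    rw [← mul_inv, ← Complex.ofReal_mul, Real.mul_self_sqrt n.cast_nonneg, Complex.ofReal_natCast]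
  by_cases hp : p.1 = p.2 <;> by_cases hq : q.1 = q.2 <;> simp [mesProj, mes, hp, hq, hsq]

theorem psiInit_mul_opB (n : ℕ) (V : Matrix (Fin n) (Fin n) ℂ) :
    psiInit n * opB n V = of fun p q =>
      if p.1 = p.2.1 ∧ p.2.2.1 = p.2.2.2 ∧ q.1 = q.2.1 then ((n : ℂ) ^ 2)⁻¹ * V q.2.2.1 q.2.2.2
      else 0 := by
  ext p q
  simp only [mul_apply, psiInit, opB, of_apply, mesProj_apply, Fintype.sum_prod_type]
  split_ifs <;> simp_all [ite_and, sq]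

theorem psiCB_mul_opMid (n : ℕ) (M : Matrix (Fin n × Fin n) (Fin n × Fin n) ℂ)
    (U : Matrix (Fin n) (Fin n) ℂ) :
    psiCB n * opMid n M U = of fun p q =>
      if p.1 = p.2.2.2 then (n : ℂ)⁻¹ * M (p.2.1, p.2.2.1) (q.2.1, q.2.2.1) * U q.1 q.2.2.2
      else 0 := by
  ext p q
  simp only [mul_apply, psiCB, opMid, of_apply, mesProj_apply, Fintype.sum_prod_type]
  split_ifs <;> simp_all [ite_and]
  ring

/-- Mathlib's `vec` stacks columns, so `vec Uᵀ (i, j) = U i j`. -/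
theorem trace_psiCB_mul_opMid_mul_psiInit_mul_opB (n : ℕ)
    (M : Matrix (Fin n × Fin n) (Fin n × Fin n) ℂ) (U : Matrix (Fin n) (Fin n) ℂ) :
    (psiCB n * opMid n M U * psiInit n * opB n Uᴴ).trace =
      star (vec Uᵀ) ⬝ᵥ (M *ᵥ vec Uᵀ) / n ^ 3 := by
  rw [mul_assoc, psiInit_mul_opB, psiCB_mul_opMid]
  simp only [trace, diag, mul_apply, of_apply, Fintype.sum_prod_type, dotProduct, mulVec,
    Finset.sum_div]
  simp only [ite_mul, mul_ite, zero_mul, mul_zero, ite_and]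
  simp only [Finset.sum_ite_eq, Finset.sum_ite_irrel, Finset.sum_const_zero, Finset.mem_univ,
    if_true, vec, transpose_apply, conjTranspose_apply, Pi.star_apply, Finset.mul_sum,
    Finset.sum_div]
  refine Finset.sum_congr rfl fun _ _ ↦ Finset.sum_congr rfl fun _ _ ↦
    Finset.sum_congr rfl fun _ _ ↦ Finset.sum_congr rfl fun _ _ ↦ ?_
  ring

theorem star_vec_transpose_dotProduct_self {m R : Type*} [Fintype m] [DecidableEq m] [CommRing R]
    [StarRing R] {U : Matrix m m R} (hU : U ∈ unitaryGroup m R) :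
    star (vec Uᵀ) ⬝ᵥ vec Uᵀ = Fintype.card m := by
  rw [star_vec_dotProduct_vec, ← star_eq_conjTranspose,
    mem_unitaryGroup_iff'.mp (transpose_mem_unitaryGroup_iff.mpr hU), trace_one]

variable {n k : ℕ}

theorem telFid_eq (M : Fin k → Matrix (Fin n × Fin n) (Fin n × Fin n) ℂ)
    (U : Fin k → Matrix (Fin n) (Fin n) ℂ) :
    telFid n k M U = ∑ i, (star (vec (U i)ᵀ) ⬝ᵥ (M i *ᵥ vec (U i)ᵀ)).re / n ^ 3 := by
  simp only [telFid, trace_psiCB_mul_opMid_mul_psiInit_mul_opB, Complex.re_sum, ← Nat.cast_pow,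
    Complex.div_natCast_re]

theorem telFid_le [NeZero n] {M : Fin k → Matrix (Fin n × Fin n) (Fin n × Fin n) ℂ}
    {U : Fin k → Matrix (Fin n) (Fin n) ℂ} (hM : ∀ i, (M i).PosSemidef) (hsum : ∑ i, M i = 1)
    (hU : ∀ i, U i ∈ unitaryGroup (Fin n) ℂ) :
    telFid n k M U ≤ k / n ^ 2 := by
  rw [telFid_eq]
  calc ∑ i, (star (vec (U i)ᵀ) ⬝ᵥ (M i *ᵥ vec (U i)ᵀ)).re / n ^ 3
      ≤ ∑ _i : Fin k, (n : ℝ) / n ^ 3 := by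
        gcongr with i
        have h := star_dotProduct_mulVec_le_of_sum_eq_one hM hsum (vec (U i)ᵀ) i
        rw [star_vec_transpose_dotProduct_self (hU i), Fintype.card_fin] at h
        exact_mod_cast (Complex.le_def.mp h).1
    _ = k / n ^ 2 := by
        rw [Finset.sum_const, Finset.card_univ, Fintype.card_fin, nsmul_eq_mul]
        field_simp

theorem exists_telFid_eq [NeZero n] (hk : 1 ≤ k) (hkn : k ≤ n ^ 2) :
    ∃ (M : Fin k → Matrix (Fin n × Fin n) (Fin n × Fin n) ℂ) (U : Fin k → Matrix (Fin n) (Fin n) ℂ),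
      (∀ i, (M i).PosSemidef) ∧ ∑ i, M i = 1 ∧ (∀ i, U i ∈ unitaryGroup (Fin n) ℂ) ∧
      (k : ℝ) / n ^ 2 = telFid n k M U := by
  obtain ⟨e⟩ : Nonempty (Fin k ↪ Fin n × Fin n) :=
    Function.Embedding.nonempty_of_card_le (by simpa [sq] using hkn)
  have : Nonempty (Fin k) := ⟨⟨0, hk⟩⟩
  obtain ⟨ζ, hζ⟩ : ∃ ζ : ℂ, IsPrimitiveRoot ζ n := ⟨_, Complex.isPrimitiveRoot_exp n (NeZero.ne n)⟩
  set s : ℝ := (√n)⁻¹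
  have hs : s ≠ 0 := inv_ne_zero (Real.sqrt_ne_zero'.mpr (Nat.cast_pos.mpr (NeZero.pos n)))
  have hsn : (s * s) • (n : ℂ) = 1 := by
    rw [← mul_inv, Real.mul_self_sqrt n.cast_nonneg, Complex.real_smul, Complex.ofReal_inv,
      Complex.ofReal_natCast, inv_mul_cancel₀ (Nat.cast_ne_zero.mpr (NeZero.ne n))]
  obtain ⟨M, hM, hsum, hMv⟩ :=
    exists_povm_mulVec_eq_self (v := fun i ↦ s • vec (weyl ζ (e i))ᵀ) fun i j ↦ by
      simp only [star_smul, star_trivial, smul_dotProduct, dotProduct_smul,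
        star_vec_transpose_weyl_dotProduct hζ, e.injective.eq_iff, smul_ite, smul_zero, smul_smul,
        hsn]
  have hMU (i : Fin k) : M i *ᵥ vec (weyl ζ (e i))ᵀ = vec (weyl ζ (e i))ᵀ :=
    smul_right_injective _ hs (by simpa only [mulVec_smul] using hMv i)
  refine ⟨M, fun i ↦ weyl ζ (e i), hM, hsum, fun i ↦ weyl_mem_unitaryGroup hζ (e i), ?_⟩
  simp only [telFid_eq, hMU, star_vec_transpose_dotProduct_self (weyl_mem_unitaryGroup hζ _),
    Fintype.card_fin, Complex.natCast_re, Finset.sum_const, Finset.card_univ, nsmul_eq_mul]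
  field_simp

end Fidelity

end ConstrainedTeleportation

theorem constrained_teleportation_max_general (d k : ℕ) (hk1 : 1 ≤ k) (hk2 : k ≤ d ^ 2) :
    IsGreatest
      {F : ℝ | ∃ (M : Fin k → Matrix (Fin d × Fin d) (Fin d × Fin d) ℂ)
          (U : Fin k → Matrix (Fin d) (Fin d) ℂ),
          (∀ i, (M i).PosSemidef) ∧ (∑ i, M i = 1) ∧
          (∀ i, U i ∈ Matrix.unitaryGroup (Fin d) ℂ) ∧
          F = telFid d k M U}
      ((k : ℝ) / (d : ℝ) ^ 2) := by
  have : NeZero d := ⟨by rintro rfl; omega⟩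
  refine ⟨ConstrainedTeleportation.exists_telFid_eq hk1 hk2, ?_⟩
  rintro F ⟨M, U, hM, hsum, hU, rfl⟩
  exact ConstrainedTeleportation.telFid_le hM hsum hU

/-- In the constrained teleportation protocol with `k ≤ d²` measurement outcomes, the maximum
of the entanglement fidelity over all `k`-element POVMs on D ⊗ A and all families of unitaries
on B equals `k/d²`. -/
theorem constrained_teleportation_max (d k : ℕ) (hd : 2 ≤ d) (hk1 : 1 ≤ k) (hk2 : k ≤ d ^ 2) :
    IsGreatest
      {F : ℝ | ∃ (M : Fin k → Matrix (Fin d × Fin d) (Fin d × Fin d) ℂ)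
          (U : Fin k → Matrix (Fin d) (Fin d) ℂ),
          (∀ i, (M i).PosSemidef) ∧ (∑ i, M i = 1) ∧
          (∀ i, U i ∈ Matrix.unitaryGroup (Fin d) ℂ) ∧
          F = telFid d k M U}
      ((k : ℝ) / (d : ℝ) ^ 2) :=
  constrained_teleportation_max_general d k hk1 hk2
end
end

section
/- Fix an integer d ≥ 2. In the constrained teleportation of a d²-dimensional system using only d² classical messages (i.e., the setting of the constrained teleportation protocol with Hilbert space dimension d² and k = d² POVM elements), the maximal entanglement fidelity over all d²-element POVMs {M_i} on ℂ^{d²} ⊗ ℂ^{d²} and unitaries U_i on ℂ^{d²} of F({M_i, U_i}) = Σ_{i=1}^{d²} tr[(ψ⁺_{CB} ⊗ I_{DA})(I_C ⊗ M_i ⊗ U_i)(ψ⁺_{CD} ⊗ ψ⁺_{AB})(I_C ⊗ I_{DA} ⊗ U_i†)] equals d²/d⁴ = 1/d², where now each of C, D, A, B has Hilbert space ℂ^{d²} and ψ⁺ denotes the maximally entangled state on ℂ^{d²} ⊗ ℂ^{d²}. -/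
open Matrix BigOperators ComplexOrder

noncomputable section

/-!
Each term of the fidelity collapses to `n⁻³ ⟨u, M u⟩`, where `u = vec Uᵀ = Σ U_ab |a⟩|b⟩` is the
vectorisation of `U`, whose squared norm is `tr (U U†) = n`. A POVM element satisfies `M ≤ 1`,
so every term is at most `n⁻²` and `F ≤ k / n²`. For `k = n` the bound is attained by the shifts
`|a⟩ ↦ |a + g⟩` of `ℤ/n` together with the projectors onto their graphs `{(a, a + g)}`: the
vectorisation of each shift is fixed by the matching projector. With `n = k = d²` this is `d²/d⁴`.
-/

open scoped MatrixOrder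

namespace Matrix

variable {n : Type*} [DecidableEq n]

theorem star_vec_dotProduct_vec_of_mem_unitaryGroup [Fintype n] {α : Type*} [CommRing α]
    [StarRing α] {U : Matrix n n α} (hU : U ∈ unitaryGroup n α) :
    star (vec U) ⬝ᵥ vec U = Fintype.card n := by
  rw [star_vec_dotProduct_vec, ← star_eq_conjTranspose, mem_unitaryGroup_iff'.mp hU, trace_one]

theorem permMatrix_mem_unitaryGroup [Fintype n] {α : Type*} [CommRing α] [StarRing α]
    (σ : Equiv.Perm n) : σ.permMatrix α ∈ unitaryGroup n α := by
  rw [mem_unitaryGroup_iff', star_eq_conjTranspose, conjTranspose_permMatrix, ← permMatrix_mul,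
    mul_inv_cancel, permMatrix_one]

variable {𝕜 : Type*} [RCLike 𝕜]

theorem le_one_of_sum_eq_one {ι : Type*} [Fintype ι] {M : ι → Matrix n n 𝕜}
    (hM : ∀ i, (M i).PosSemidef) (hsum : ∑ i, M i = 1) (i : ι) : M i ≤ 1 :=
  hsum ▸ Finset.single_le_sum (fun j _ => (hM j).nonneg) (Finset.mem_univ i)

theorem dotProduct_mulVec_le_of_le_one [Fintype n] {M : Matrix n n 𝕜} (hM : M ≤ 1) (v : n → 𝕜) :
    star v ⬝ᵥ (M *ᵥ v) ≤ star v ⬝ᵥ v := by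
  have := (le_iff.mp hM).dotProduct_mulVec_nonneg v
  rwa [sub_mulVec, one_mulVec, dotProduct_sub, sub_nonneg] at this

end Matrix

theorem mesProj_apply (n : ℕ) (p q : Fin n × Fin n) :
    mesProj n p q = if p.1 = p.2 ∧ q.1 = q.2 then (n : ℂ)⁻¹ else 0 := by
  by_cases hp : p.1 = p.2 <;> by_cases hq : q.1 = q.2 <;>
    simp [mesProj, mes, hp, hq, ← Complex.ofReal_mul, ← mul_inv, Real.mul_self_sqrt]

theorem psiCB_mul_opMid (n : ℕ) (M : Matrix (Fin n × Fin n) (Fin n × Fin n) ℂ)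
    (U : Matrix (Fin n) (Fin n) ℂ) :
    psiCB n * opMid n M U = Matrix.of fun p q : I4 n =>
      if p.1 = p.2.2.2 then (n : ℂ)⁻¹ * M (p.2.1, p.2.2.1) (q.2.1, q.2.2.1) * U q.1 q.2.2.2
      else 0 := by
  ext p q
  simp only [psiCB, mesProj_apply, ite_and, mul_ite, mul_one, mul_zero, opMid, ite_mul, one_mul,
    zero_mul, Matrix.mul_apply, of_apply, Fintype.sum_prod_type, Finset.sum_ite_irrel,
    Finset.sum_ite_eq, Finset.mem_univ, ↓reduceIte, Finset.sum_const_zero, Finset.sum_ite_eq']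
  split_ifs <;> ring

theorem psiInit_mul_opB (n : ℕ) (U : Matrix (Fin n) (Fin n) ℂ) :
    psiInit n * opB n Uᴴ = Matrix.of fun p q : I4 n =>
      if p.1 = p.2.1 ∧ p.2.2.1 = p.2.2.2 ∧ q.1 = q.2.1 then
        (n : ℂ)⁻¹ ^ 2 * star (U q.2.2.2 q.2.2.1) else 0 := by
  ext p q
  simp only [psiInit, mesProj_apply, ite_and, mul_ite, ite_mul, zero_mul, mul_zero, opB,
    conjTranspose_apply, one_mul, Matrix.mul_apply, of_apply, Fintype.sum_prod_type,
    Finset.sum_ite_irrel, Finset.sum_ite_eq, Finset.mem_univ, ↓reduceIte, Finset.sum_const_zero,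
    Finset.sum_ite_eq']
  split_ifs <;> ring

theorem trace_psiCB_mul_opMid_mul_psiInit_mul_opB (n : ℕ)
    (M : Matrix (Fin n × Fin n) (Fin n × Fin n) ℂ) (U : Matrix (Fin n) (Fin n) ℂ) :
    trace (psiCB n * opMid n M U * psiInit n * opB n Uᴴ) =
      (n : ℂ)⁻¹ ^ 3 * (star (vec Uᵀ) ⬝ᵥ (M *ᵥ vec Uᵀ)) := by
  rw [Matrix.mul_assoc, psiCB_mul_opMid, psiInit_mul_opB]
  simp only [trace, ite_and, diag_apply, Matrix.mul_apply, of_apply, mul_ite, ite_mul, zero_mul,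
    mul_zero, Fintype.sum_prod_type, Finset.sum_ite_irrel, Finset.sum_ite_eq, Finset.mem_univ,
    ↓reduceIte, Finset.sum_const_zero, dotProduct, Pi.star_apply, vec, transpose_apply, mulVec,
    Finset.mul_sum]
  congr! 4
  ring

theorem telFid_eq (n k : ℕ) (M : Fin k → Matrix (Fin n × Fin n) (Fin n × Fin n) ℂ)
    (U : Fin k → Matrix (Fin n) (Fin n) ℂ) :
    telFid n k M U = (n : ℝ)⁻¹ ^ 3 * ∑ i, (star (vec (U i)ᵀ) ⬝ᵥ (M i *ᵥ vec (U i)ᵀ)).re := by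
  rw [telFid]
  simp only [trace_psiCB_mul_opMid_mul_psiInit_mul_opB, ← Finset.mul_sum]
  rw [show (n : ℂ)⁻¹ ^ 3 = ((n : ℝ)⁻¹ ^ 3 : ℝ) by push_cast; rfl, Complex.re_ofReal_mul,
    Complex.re_sum]

theorem telFid_le (n k : ℕ) (M : Fin k → Matrix (Fin n × Fin n) (Fin n × Fin n) ℂ)
    (U : Fin k → Matrix (Fin n) (Fin n) ℂ) (hM : ∀ i, (M i).PosSemidef) (hsum : ∑ i, M i = 1)
    (hU : ∀ i, U i ∈ unitaryGroup (Fin n) ℂ) :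
    telFid n k M U ≤ k / n ^ 2 := by
  have hterm (i : Fin k) : (star (vec (U i)ᵀ) ⬝ᵥ (M i *ᵥ vec (U i)ᵀ)).re ≤ n := by
    have hq := dotProduct_mulVec_le_of_le_one (le_one_of_sum_eq_one hM hsum i) (vec (U i)ᵀ)
    rw [star_vec_dotProduct_vec_of_mem_unitaryGroup (transpose_mem_unitaryGroup_iff.mpr (hU i)),
      Fintype.card_fin] at hq
    simpa using Complex.re_le_re hq
  calc telFid n k M U ≤ (n : ℝ)⁻¹ ^ 3 * ∑ _ : Fin k, (n : ℝ) := by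
        rw [telFid_eq]
        gcongr with i
        exact hterm i
    _ = k / n ^ 2 := by
      rw [Finset.sum_const, Finset.card_univ, Fintype.card_fin, nsmul_eq_mul]
      rcases eq_or_ne (n : ℝ) 0 with hn | hn
      · simp [hn]
      · field_simp

section Shift

variable {G : Type*} [AddGroup G] [DecidableEq G]

def shiftUnitary (g : G) : Matrix G G ℂ := (Equiv.addRight g).permMatrix ℂ

def shiftPOVM (g : G) : Matrix (G × G) (G × G) ℂ :=
  diagonal fun p => if p.1 + g = p.2 then 1 else 0

theorem shiftUnitary_mem_unitaryGroup [Fintype G] (g : G) :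
    shiftUnitary g ∈ unitaryGroup G ℂ :=
  permMatrix_mem_unitaryGroup _

theorem vec_transpose_shiftUnitary (g : G) :
    vec (shiftUnitary g)ᵀ = fun p => if p.1 + g = p.2 then 1 else 0 := by
  funext p
  show shiftUnitary g p.1 p.2 = _
  simp [shiftUnitary, PEquiv.toMatrix_apply]

theorem shiftPOVM_posSemidef (g : G) : (shiftPOVM g).PosSemidef :=
  PosSemidef.diagonal fun p => by dsimp only; split_ifs <;> simp

theorem sum_shiftPOVM [Fintype G] : ∑ g : G, shiftPOVM g = 1 := by
  ext p q
  simp only [shiftPOVM, Matrix.sum_apply, diagonal_apply, one_apply]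
  rcases eq_or_ne p q with rfl | hpq
  · simp [← eq_neg_add_iff_add_eq]
  · simp [hpq]

theorem shiftPOVM_mulVec [Fintype G] (g : G) :
    shiftPOVM g *ᵥ vec (shiftUnitary g)ᵀ = vec (shiftUnitary g)ᵀ := by
  rw [vec_transpose_shiftUnitary]
  ext p
  simp only [shiftPOVM, mulVec_diagonal]
  split_ifs <;> simp

end Shift

theorem telFid_shift (n : ℕ) [NeZero n] : telFid n n shiftPOVM shiftUnitary = (n : ℝ)⁻¹ := by
  have hterm (g : Fin n) :
      star (vec (shiftUnitary g)ᵀ) ⬝ᵥ (shiftPOVM g *ᵥ vec (shiftUnitary g)ᵀ) = n := by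
    rw [shiftPOVM_mulVec, star_vec_dotProduct_vec_of_mem_unitaryGroup
      (transpose_mem_unitaryGroup_iff.mpr (shiftUnitary_mem_unitaryGroup g)), Fintype.card_fin]
  simp only [telFid_eq, hterm, Complex.natCast_re, Finset.sum_const, Finset.card_univ,
    Fintype.card_fin, nsmul_eq_mul]
  have : (n : ℝ) ≠ 0 := NeZero.ne _
  field_simp

/-- Constrained teleportation of a `d²`-dimensional system with only `d²` classical messages:
the maximal entanglement fidelity over all `d²`-element POVMs and unitaries equals
`d²/d⁴ = 1/d²`. Here each system C, D, A, B has Hilbert space `ℂ^{d²}`. -/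
theorem constrained_teleportation_joint (d : ℕ) (hd : 2 ≤ d) :
    IsGreatest
      {F : ℝ | ∃ (M : Fin (d ^ 2) → Matrix (Fin (d ^ 2) × Fin (d ^ 2)) (Fin (d ^ 2) × Fin (d ^ 2)) ℂ)
          (U : Fin (d ^ 2) → Matrix (Fin (d ^ 2)) (Fin (d ^ 2)) ℂ),
          (∀ i, (M i).PosSemidef) ∧ (∑ i, M i = 1) ∧
          (∀ i, U i ∈ Matrix.unitaryGroup (Fin (d ^ 2)) ℂ) ∧
          F = telFid (d ^ 2) (d ^ 2) M U}
      ((d : ℝ) ^ 2 / (d : ℝ) ^ 4) := by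
  have hd0 : (d : ℝ) ≠ 0 := Nat.cast_ne_zero.mpr (by omega)
  have : NeZero (d ^ 2) := ⟨pow_ne_zero 2 (by omega)⟩
  refine ⟨⟨shiftPOVM, shiftUnitary, shiftPOVM_posSemidef, sum_shiftPOVM,
    shiftUnitary_mem_unitaryGroup, ?_⟩, ?_⟩
  · rw [telFid_shift]
    push_cast
    field_simp
  · rintro _ ⟨M, U, hM, hsum, hU, rfl⟩
    refine (telFid_le _ _ M U hM hsum hU).trans_eq ?_
    push_cast
    ring
end
end

section
/- Fix an integer d ≥ 2 and a real number p ∈ [0,1]. Let x₁, x₂ ∈ [0,1] be real numbers satisfying the monogamy-type constraint x₁² + x₂² ≤ (d−1)/d + (x₁ + x₂)²/(d+1). Then p·x₁² + (1−p)·x₂² ≤ (1/2)·(1 + √(1 − 4(d²−1)p(1−p)/d²)). (This yields the upper bound on the success probability of the asymmetric two-input CNS-QRAC, where the two input states are chosen with probabilities p and 1−p.) -/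
/-!
In the coordinates `s = x₁ + x₂`, `t = x₁ - x₂` the monogamy constraint is the ellipse
`s² / (d + 1) + t² / (d - 1) ≤ 2 / d`, and with `q = 2p - 1` the objective is half the quadratic
form `(s² + t²) / 2 + q s t`. After rescaling the ellipse to a disc of radius² `2 / d`, the form is
bounded by its largest eigenvalue `(d + √(1 + (d² - 1) q²)) / 2` times `2 / d`, which is exactly
the claimed bound since `d² - 4 (d² - 1) p (1 - p) = 1 + (d² - 1) q²`.
-/

open Real

theorem quadratic_form_nonneg_of_sq_le_mul {A B C : ℝ} (hA : 0 ≤ A) (hC : 0 ≤ C)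
    (hB : B ^ 2 ≤ A * C) (s t : ℝ) : 0 ≤ A * s ^ 2 - 2 * B * s * t + C * t ^ 2 := by
  rcases hA.eq_or_lt with rfl | hA
  · have hB0 : B = 0 := by nlinarith [sq_nonneg B]
    subst hB0
    nlinarith [sq_nonneg t]
  · -- completing the square: `A * Q = (A s - B t)² + (A C - B²) t²`
    have : 0 ≤ A * (A * s ^ 2 - 2 * B * s * t + C * t ^ 2) := by
      nlinarith [sq_nonneg (A * s - B * t), mul_nonneg (sub_nonneg.2 hB) (sq_nonneg t)]
    exact nonneg_of_mul_nonneg_right (by linarith) hA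

section
variable {d : ℝ}

theorem ellipse_of_monogamy (hd : 1 < d) {x₁ x₂ : ℝ}
    (h : x₁ ^ 2 + x₂ ^ 2 ≤ (d - 1) / d + (x₁ + x₂) ^ 2 / (d + 1)) :
    (x₁ + x₂) ^ 2 / (d + 1) + (x₁ - x₂) ^ 2 / (d - 1) ≤ 2 / d := by
  have hd1 : 0 < d - 1 := by linarith
  have key : (x₁ - x₂) ^ 2 / (d - 1) ≤ 2 / d - (x₁ + x₂) ^ 2 / (d + 1) := by
    rw [div_le_iff₀ hd1]
    have : (2 / d - (x₁ + x₂) ^ 2 / (d + 1)) * (d - 1)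
        = 2 * ((d - 1) / d + (x₁ + x₂) ^ 2 / (d + 1)) - (x₁ + x₂) ^ 2 := by
      field_simp; ring
    rw [this]; nlinarith
  linarith

theorem quadratic_form_le_on_ellipse (hd : 1 < d) (q : ℝ) {s t : ℝ}
    (h : s ^ 2 / (d + 1) + t ^ 2 / (d - 1) ≤ 2 / d) :
    (s ^ 2 + t ^ 2) / 2 + q * s * t ≤ 1 + √(1 + (d ^ 2 - 1) * q ^ 2) / d := by
  set K := √(1 + (d ^ 2 - 1) * q ^ 2)
  have hd1 : 0 < d - 1 := by linarith
  have hq : 0 ≤ (d ^ 2 - 1) * q ^ 2 := mul_nonneg (by nlinarith) (sq_nonneg q)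
  have hK : K ^ 2 = 1 + (d ^ 2 - 1) * q ^ 2 := sq_sqrt (by linarith)
  have hK1 : 1 ≤ K := one_le_sqrt.2 (by linarith)
  -- `(d + K) / 2` times the ellipse minus the form is the degenerate nonnegative form with `A C = B²`
  have hform := quadratic_form_nonneg_of_sq_le_mul (A := (K - 1) / (2 * (d + 1)))
    (B := q / 2) (C := (K + 1) / (2 * (d - 1))) (by positivity) (by positivity)
    (le_of_eq (by field_simp; nlinarith [hK])) s t
  calc (s ^ 2 + t ^ 2) / 2 + q * s * t
      ≤ (d + K) / 2 * (s ^ 2 / (d + 1) + t ^ 2 / (d - 1)) := by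
        have : (d + K) / 2 * (s ^ 2 / (d + 1) + t ^ 2 / (d - 1))
              - ((s ^ 2 + t ^ 2) / 2 + q * s * t)
            = (K - 1) / (2 * (d + 1)) * s ^ 2 - 2 * (q / 2) * s * t
              + (K + 1) / (2 * (d - 1)) * t ^ 2 := by
          field_simp; ring
        linarith
    _ ≤ (d + K) / 2 * (2 / d) := by gcongr
    _ = 1 + K / d := by field_simp

theorem sqrt_one_sub_mul_one_sub_div_sq (hd : 0 < d) (p : ℝ) :
    √(1 - 4 * (d ^ 2 - 1) * p * (1 - p) / d ^ 2) = √(1 + (d ^ 2 - 1) * (2 * p - 1) ^ 2) / d := by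
  rw [← sqrt_sq hd.le, ← sqrt_div' _ (sq_nonneg d), sqrt_sq hd.le]
  congr 1
  field_simp
  ring

end

theorem asymmetric_cnsqrac_bound_general (d : ℕ) (hd : 2 ≤ d) (p x₁ x₂ : ℝ)
    (hcon : x₁ ^ 2 + x₂ ^ 2 ≤ ((d : ℝ) - 1) / d + (x₁ + x₂) ^ 2 / ((d : ℝ) + 1)) :
    p * x₁ ^ 2 + (1 - p) * x₂ ^ 2
      ≤ (1 / 2) * (1 + Real.sqrt (1 - 4 * ((d : ℝ) ^ 2 - 1) * p * (1 - p) / (d : ℝ) ^ 2)) := by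
  have hd1 : (1 : ℝ) < d := by exact_mod_cast hd
  have hobj : p * x₁ ^ 2 + (1 - p) * x₂ ^ 2
      = ((x₁ + x₂) ^ 2 + (x₁ - x₂) ^ 2) / 2 / 2 + (2 * p - 1) * (x₁ + x₂) * (x₁ - x₂) / 2 := by
    ring
  rw [hobj, sqrt_one_sub_mul_one_sub_div_sq (by linarith)]
  linarith [quadratic_form_le_on_ellipse hd1 (2 * p - 1) (ellipse_of_monogamy hd1 hcon)]

/-- Asymmetric two-input CNS-QRAC bound: if `x₁, x₂ ∈ [0,1]` satisfy the
entanglement-monogamy constraint `x₁² + x₂² ≤ (d−1)/d + (x₁ + x₂)²/(d+1)`, then for any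
probability `p ∈ [0,1]`,
`p·x₁² + (1−p)·x₂² ≤ (1/2)(1 + √(1 − 4(d²−1)p(1−p)/d²))`. -/
theorem asymmetric_cnsqrac_bound (d : ℕ) (hd : 2 ≤ d) (p x₁ x₂ : ℝ)
    (hp : p ∈ Set.Icc (0 : ℝ) 1)
    (hx₁ : x₁ ∈ Set.Icc (0 : ℝ) 1) (hx₂ : x₂ ∈ Set.Icc (0 : ℝ) 1)
    (hcon : x₁ ^ 2 + x₂ ^ 2 ≤ ((d : ℝ) - 1) / d + (x₁ + x₂) ^ 2 / ((d : ℝ) + 1)) :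
    p * x₁ ^ 2 + (1 - p) * x₂ ^ 2
      ≤ (1 / 2) * (1 + Real.sqrt (1 - 4 * ((d : ℝ) ^ 2 - 1) * p * (1 - p) / (d : ℝ) ^ 2)) :=
  asymmetric_cnsqrac_bound_general d hd p x₁ x₂ hcon
end

section
/- Let X, Z be the 2 × 2 Pauli matrices with real powers Z^t = diag(1, e^{iπt}) and X^t = H Z^t H. For c ∈ {0,1} and b₀, b₁ ∈ {0,1}, define |φ^c_{b₀,b₁}⟩ = (X^{(−1)^c b₀ + (1−2c)/4} Z^{(−1)^c b₁ + (1−2c)/4} ⊗ I)|ψ⁺⟩. Then for each fixed c, the four vectors {|φ^c_{b₀,b₁}⟩ : b₀, b₁ ∈ {0,1}} form an orthonormal basis of ℂ² ⊗ ℂ². (These are the measurement bases used by Bob in the QRAC-SE protocol 2₄ → (1₂, 1₂) for choice c.) -/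
open Matrix Kronecker BigOperators Complex

noncomputable section

/-- The maximally entangled state `|ψ⁺⟩ = (1/√2)(|00⟩ + |11⟩)` on `ℂ² ⊗ ℂ²`. -/
def mes2 : Fin 2 × Fin 2 → ℂ :=
  fun p => if p.1 = p.2 then ((1 / Real.sqrt 2 : ℝ) : ℂ) else 0

/-- The Hadamard matrix `H = (1/√2)[[1,1],[1,−1]]`. -/
def Hm : Matrix (Fin 2) (Fin 2) ℂ :=
  ((1 / Real.sqrt 2 : ℝ) : ℂ) • !![1, 1; 1, -1]

/-- Real powers of the Pauli `Z`: `Z^t = diag(1, e^{iπt})`. -/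
def Zpow (t : ℝ) : Matrix (Fin 2) (Fin 2) ℂ :=
  !![1, 0; 0, Complex.exp (Real.pi * t * Complex.I)]

/-- Real powers of the Pauli `X`: `X^t = H Z^t H`. -/
def Xpow (t : ℝ) : Matrix (Fin 2) (Fin 2) ℂ :=
  Hm * Zpow t * Hm

/-- Overlap `⟨ψ⁺|(X^s Z^t ⊗ I)|ψ⁺⟩`. -/
def overlap (s t : ℝ) : ℂ :=
  star mes2 ⬝ᵥ ((Xpow s * Zpow t) ⊗ₖ (1 : Matrix (Fin 2) (Fin 2) ℂ)).mulVec mes2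

/-- Bob's decoding vectors
`|φ^c_{b₀,b₁}⟩ = (X^{(−1)^c b₀ + (1−2c)/4} Z^{(−1)^c b₁ + (1−2c)/4} ⊗ I)|ψ⁺⟩`. -/
def bobVec (c b₀ b₁ : Fin 2) : Fin 2 × Fin 2 → ℂ :=
  ((Xpow ((-1 : ℝ) ^ (c : ℕ) * ((b₀ : ℕ) : ℝ) + (1 - 2 * ((c : ℕ) : ℝ)) / 4) *
      Zpow ((-1 : ℝ) ^ (c : ℕ) * ((b₁ : ℕ) : ℝ) + (1 - 2 * ((c : ℕ) : ℝ)) / 4)) ⊗ₖ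
    (1 : Matrix (Fin 2) (Fin 2) ℂ)).mulVec mes2

/-!
`s ↦ X^s` and `t ↦ Z^t` are one-parameter groups of unitaries, and
`⟨(A ⊗ I)ψ⁺, (B ⊗ I)ψ⁺⟩ = tr (A† B) / 2`, so
`⟨φ_b, φ_b'⟩ = tr (X^{s'-s} Z^{t'-t}) / 2 = (1 + e^{iπ(s'-s)}) (1 + e^{iπ(t'-t)}) / 4`.
The offsets `(1-2c)/4` cancel in the differences, which are `0` or `±1` according as the bits
agree, so the Gram matrix is the identity; four orthonormal vectors span `ℂ⁴`.
-/

lemma inv_sqrt_two_mul_self : ((Real.sqrt 2 : ℂ))⁻¹ * (Real.sqrt 2 : ℂ)⁻¹ = 2⁻¹ := by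
  rw [← mul_inv, ← Complex.ofReal_mul, Real.mul_self_sqrt zero_le_two, Complex.ofReal_ofNat]

lemma Hm_mul_Hm : Hm * Hm = 1 := by
  ext i j
  fin_cases i <;> fin_cases j <;>
    simp [Hm, Matrix.mul_apply, Fin.sum_univ_two, inv_sqrt_two_mul_self] <;> norm_num

lemma Hm_conjTranspose : Hmᴴ = Hm := by
  ext i j
  fin_cases i <;> fin_cases j <;> simp [Hm]

lemma Zpow_add (s t : ℝ) : Zpow (s + t) = Zpow s * Zpow t := by
  ext i j
  fin_cases i <;> fin_cases j <;> simp [Zpow, ← Complex.exp_add, mul_add, add_mul]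

lemma Zpow_conjTranspose (t : ℝ) : (Zpow t)ᴴ = Zpow (-t) := by
  ext i j
  fin_cases i <;> fin_cases j <;> simp [Zpow, ← Complex.exp_conj]

lemma Xpow_add (s t : ℝ) : Xpow (s + t) = Xpow s * Xpow t := by
  simp only [Xpow, Zpow_add, Matrix.mul_assoc]
  rw [← Matrix.mul_assoc Hm Hm, Hm_mul_Hm, Matrix.one_mul]

lemma Xpow_conjTranspose (s : ℝ) : (Xpow s)ᴴ = Xpow (-s) := by
  simp [Xpow, Matrix.conjTranspose_mul, Hm_conjTranspose, Zpow_conjTranspose, Matrix.mul_assoc]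

lemma trace_Xpow_mul_Zpow (s t : ℝ) :
    trace (Xpow s * Zpow t) =
      (1 + Complex.exp (Real.pi * s * Complex.I)) *
        (1 + Complex.exp (Real.pi * t * Complex.I)) / 2 := by
  simp [Xpow, Hm, Zpow, Matrix.trace, Fin.sum_univ_two]
  linear_combination
    (1 + Complex.exp (Real.pi * s * Complex.I)) * (1 + Complex.exp (Real.pi * t * Complex.I)) *
      inv_sqrt_two_mul_self

lemma trace_conjTranspose_Xpow_mul_Zpow_mul (s t s' t' : ℝ) :
    trace ((Xpow s * Zpow t)ᴴ * (Xpow s' * Zpow t')) = trace (Xpow (s' - s) * Zpow (t' - t)) := by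
  rw [Matrix.conjTranspose_mul, Xpow_conjTranspose, Zpow_conjTranspose, sub_eq_neg_add s',
    sub_eq_add_neg t', Xpow_add, Zpow_add, Matrix.mul_assoc (Zpow (-t)),
    Matrix.trace_mul_comm (Zpow (-t))]
  simp only [Matrix.mul_assoc]

lemma kronecker_one_mulVec_mes2_apply (M : Matrix (Fin 2) (Fin 2) ℂ) (p : Fin 2 × Fin 2) :
    ((M ⊗ₖ (1 : Matrix (Fin 2) (Fin 2) ℂ)) *ᵥ mes2) p =
      ((1 / Real.sqrt 2 : ℝ) : ℂ) * M p.1 p.2 := by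
  obtain ⟨i, j⟩ := p
  fin_cases j <;> simp [mulVec, dotProduct, Fintype.sum_prod_type, mes2, Matrix.one_apply, mul_comm]

lemma star_kronecker_one_mulVec_mes2_dotProduct (M N : Matrix (Fin 2) (Fin 2) ℂ) :
    star ((M ⊗ₖ (1 : Matrix (Fin 2) (Fin 2) ℂ)) *ᵥ mes2) ⬝ᵥ
        (N ⊗ₖ (1 : Matrix (Fin 2) (Fin 2) ℂ)) *ᵥ mes2 = trace (Mᴴ * N) / 2 := by
  simp [dotProduct, kronecker_one_mulVec_mes2_apply, Fintype.sum_prod_type,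
    Matrix.trace, Matrix.mul_apply, Fin.sum_univ_two]
  linear_combination (starRingEnd ℂ (M 0 0) * N 0 0 + starRingEnd ℂ (M 0 1) * N 0 1 +
    starRingEnd ℂ (M 1 0) * N 1 0 + starRingEnd ℂ (M 1 1) * N 1 1) * inv_sqrt_two_mul_self

lemma one_add_exp_pi_mul_I_sub_eq_ite (c b b' : Fin 2) (o : ℝ) :
    1 + Complex.exp (Real.pi * (((-1 : ℝ) ^ (c : ℕ) * ((b' : ℕ) : ℝ) + o) -
      ((-1 : ℝ) ^ (c : ℕ) * ((b : ℕ) : ℝ) + o) : ℝ) * Complex.I) =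
      if b = b' then 2 else 0 := by
  rw [add_sub_add_right_eq_sub, ← mul_sub]
  fin_cases c <;> fin_cases b <;> fin_cases b' <;>
    norm_num [Complex.exp_pi_mul_I, Complex.exp_neg]

lemma linearIndependent_of_star_dotProduct_eq_ite {ι n R : Type*} [Fintype n] [DecidableEq ι]
    [CommRing R] [StarRing R] {v : ι → n → R}
    (h : ∀ i j, star (v i) ⬝ᵥ v j = if i = j then 1 else 0) : LinearIndependent R v := by
  rw [linearIndependent_iff']
  intro s g hg i hi
  have := congrArg (star (v i) ⬝ᵥ ·) hg
  simpa [dotProduct_sum, dotProduct_smul, h, hi] using this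

/-- For each fixed choice `c ∈ {0,1}`, the four vectors `|φ^c_{b₀,b₁}⟩`, `b₀, b₁ ∈ {0,1}`,
form an orthonormal basis of `ℂ² ⊗ ℂ²`: they are pairwise orthonormal and span the space. -/
theorem bob_basis_orthonormal (c : Fin 2) :
    (∀ b b' : Fin 2 × Fin 2,
        star (bobVec c b.1 b.2) ⬝ᵥ bobVec c b'.1 b'.2 = if b = b' then 1 else 0) ∧
    Submodule.span ℂ (Set.range fun b : Fin 2 × Fin 2 => bobVec c b.1 b.2) = ⊤ := by
  have orthonormal : ∀ b b' : Fin 2 × Fin 2,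
      star (bobVec c b.1 b.2) ⬝ᵥ bobVec c b'.1 b'.2 = if b = b' then 1 else 0 := by
    rintro ⟨b₀, b₁⟩ ⟨b₀', b₁'⟩
    rw [bobVec, bobVec, star_kronecker_one_mulVec_mes2_dotProduct,
      trace_conjTranspose_Xpow_mul_Zpow_mul, trace_Xpow_mul_Zpow, one_add_exp_pi_mul_I_sub_eq_ite,
      one_add_exp_pi_mul_I_sub_eq_ite]
    split_ifs <;> simp_all
  exact ⟨orthonormal,
    (linearIndependent_of_star_dotProduct_eq_ite orthonormal).span_eq_top_of_card_eq_finrank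
      (by simp)⟩
end
end
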